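/- Every nonzero codeword of the quasi-cyclic code Q_q(f,g,h) has Hamming weight at least d_q^e(f,g,h), where d_q^e(f,g,h) is the minimum of the four quantities: d([g(x)]); d([(x^n-1)/gcd(x^n-1, h(x))]); d([lcm(f(x), g(x)/gcd(g(x), h(x)))]); and d([f(x)]) + d([gcd(h(x)f(x), g(x))]). -/

import Mathlib

open Polynomial Finset

noncomputable section

variable {F : Type*} [Field F] [DecidableEq F]

/-- The vector in `F^n` corresponding to the residue class of a polynomial
in `F[x]/(x^n-1)`: the coefficients of its canonical representative of degree `< n`. -/
def vecOf (n : ℕ) : F[X] →ₗ[F] (Fin n → F) where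
  toFun a := fun i => (a %ₘ (X ^ n - 1)).coeff i
  map_add' a b := by
    funext i
    simp [Polynomial.add_modByMonic]
  map_smul' c a := by
    funext i
    simp [Polynomial.smul_modByMonic]

/-- The quasi-cyclic code `Q_q(f,g,h)`: the `F`-subspace of `F^n × F^n ≃ F^{2n}`
corresponding to the `R`-submodule of `R²` generated by `([f],[h f])` and `(0,[g])`. -/
def QCcode (n : ℕ) (f g h : F[X]) : Submodule F ((Fin n → F) × (Fin n → F)) where
  carrier := {v | ∃ a b : F[X], v = (vecOf n (a * f), vecOf n (a * h * f + b * g))}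
  zero_mem' := ⟨0, 0, by simp; rfl⟩
  add_mem' := by
    rintro v w ⟨a1, b1, rfl⟩ ⟨a2, b2, rfl⟩
    refine ⟨a1 + a2, b1 + b2, ?_⟩
    have h1 : (a1 + a2) * f = a1 * f + a2 * f := by ring
    have h2 : (a1 + a2) * h * f + (b1 + b2) * g
        = (a1 * h * f + b1 * g) + (a2 * h * f + b2 * g) := by ring
    rw [h1, h2, map_add (vecOf n) (a1 * f) (a2 * f),
      map_add (vecOf n) (a1 * h * f + b1 * g) (a2 * h * f + b2 * g)]
    rfl
  smul_mem' := by
    rintro c v ⟨a, b, rfl⟩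
    refine ⟨c • a, c • b, ?_⟩
    have h1 : (c • a) * f = c • (a * f) := smul_mul_assoc c a f
    have h2 : (c • a) * h * f + (c • b) * g = c • (a * h * f + b * g) := by
      rw [smul_add, smul_mul_assoc, smul_mul_assoc, smul_mul_assoc]
    rw [h1, h2, map_smul, map_smul]
    rfl

/-- Hamming weight of a vector. -/
def hWt {n : ℕ} (x : Fin n → F) : ℕ := Nat.card {i : Fin n // x i ≠ 0}

/-- Hamming weight of a vector of `F^{2n}` presented as a pair. -/
def hWt2 {n : ℕ} (v : (Fin n → F) × (Fin n → F)) : ℕ := hWt v.1 + hWt v.2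

/-- Symplectic weight. -/
def sWt {n : ℕ} (v : (Fin n → F) × (Fin n → F)) : ℕ :=
  Nat.card {i : Fin n // (v.1 i, v.2 i) ≠ (0, 0)}

/-- Euclidean inner product on `F^n`. -/
def eInn {n : ℕ} (x y : Fin n → F) : F := ∑ i, x i * y i

/-- Euclidean inner product on `F^{2n}`. -/
def eInn2 {n : ℕ} (x y : (Fin n → F) × (Fin n → F)) : F := eInn x.1 y.1 + eInn x.2 y.2

/-- Symplectic inner product on `F^{2n}`. -/
def sInn {n : ℕ} (x y : (Fin n → F) × (Fin n → F)) : F :=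
  ∑ i, (x.1 i * y.2 i - x.2 i * y.1 i)

/-- Hermitian inner product on `F^{2n}` (with respect to `x ↦ x^q`). -/
def hInn2 (q : ℕ) {n : ℕ} (x y : (Fin n → F) × (Fin n → F)) : F :=
  (∑ i, x.1 i ^ q * y.1 i) + ∑ i, x.2 i ^ q * y.2 i

def sDualSet {n : ℕ} (C : Set ((Fin n → F) × (Fin n → F))) : Set ((Fin n → F) × (Fin n → F)) :=
  {x | ∀ y ∈ C, sInn x y = 0}

def eDualSet {n : ℕ} (C : Set ((Fin n → F) × (Fin n → F))) : Set ((Fin n → F) × (Fin n → F)) :=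
  {x | ∀ y ∈ C, eInn2 x y = 0}

def hDualSet (q : ℕ) {n : ℕ} (C : Set ((Fin n → F) × (Fin n → F))) :
    Set ((Fin n → F) × (Fin n → F)) :=
  {x | ∀ y ∈ C, hInn2 q x y = 0}

/-- `x^n f(1/x)` for `f` of degree `< n`. -/
def barPoly (n : ℕ) (f : F[X]) : F[X] := ∑ i ∈ f.support, C (f.coeff i) * X ^ (n - i)

/-- `f^⊥ = x^{deg f'} f'(1/x)` where `f f' = x^n - 1`. -/
def perpPoly (n : ℕ) (f : F[X]) : F[X] := ((X ^ n - 1) /ₘ f).reverse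

/-- coefficientwise `q`-th power. -/
def polyQ (q : ℕ) (f : F[X]) : F[X] := ∑ i ∈ f.support, C (f.coeff i ^ q) * X ^ i

/-- minimum Hamming weight of the cyclic code generated by `[u]`. -/
def cycDist (n : ℕ) (u : F[X]) : ℕ :=
  sInf {w | ∃ a : F[X], vecOf n (a * u) ≠ 0 ∧ w = hWt (vecOf n (a * u))}

/-- The general QC set generated by `([u₁],[v₁])` and `([u₂],[v₂])`. -/
def QCspan (n : ℕ) (u₁ v₁ u₂ v₂ : F[X]) : Set ((Fin n → F) × (Fin n → F)) :=
  {w | ∃ a b : F[X], w = (vecOf n (a * u₁ + b * u₂), vecOf n (a * v₁ + b * v₂))}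

/-- The lower bound `d_q(f,g,h)` for the symplectic weight (a rational number). -/
def dSymp (q n : ℕ) (f g h : F[X]) : ℚ :=
  min (min (min (cycDist n g : ℚ)
    (cycDist n ((X ^ n - 1) / GCDMonoid.gcd (X ^ n - 1) h) : ℚ))
    (cycDist n (GCDMonoid.lcm f (g / GCDMonoid.gcd g h)) : ℚ))
    ((cycDist n f + cycDist n (GCDMonoid.gcd (h * f) g) + ((q : ℚ) - 1) * cycDist n (GCDMonoid.gcd f g)) / q)

/-- The lower bound `d_q^e(f,g,h)` for the minimum distance. -/
def dEucl (n : ℕ) (f g h : F[X]) : ℕ :=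
  min (min (min (cycDist n g)
    (cycDist n ((X ^ n - 1) / GCDMonoid.gcd (X ^ n - 1) h)))
    (cycDist n (GCDMonoid.lcm f (g / GCDMonoid.gcd g h))))
    (cycDist n f + cycDist n (GCDMonoid.gcd (h * f) g))

end

/-! Write a codeword as `([a f], [a h f + b g])`. If the first coordinate vanishes, the second
is `[b g] ≠ 0`, of weight at least `d([g])`. If the second vanishes, then `g ∣ a h f`, so
`g / gcd(g, h)` divides `a f` and the first coordinate lies in the cyclic code of
`lcm(f, g / gcd(g, h))`. Otherwise the two coordinates lie in the cyclic codes of `f` and of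
`gcd(h f, g)` respectively, and their weights add up. -/

lemma div_gcd_dvd_of_dvd_mul {R : Type*} [EuclideanDomain R] [GCDMonoid R] {a b c : R}
    (ha : a ≠ 0) (h : a ∣ b * c) : a / GCDMonoid.gcd a b ∣ c := by
  have hd : GCDMonoid.gcd a b ≠ 0 := gcd_ne_zero_of_left ha
  refine (isCoprime_div_gcd_div_gcd_of_gcd_ne_zero hd).dvd_of_dvd_mul_left
    ((mul_dvd_mul_iff_left hd).1 ?_)
  rwa [← mul_assoc, EuclideanDomain.mul_div_cancel' hd (gcd_dvd_left a b),
    EuclideanDomain.mul_div_cancel' hd (gcd_dvd_right a b)]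

variable {F : Type*} [Field F] {n : ℕ}

lemma monic_X_pow_sub_one (hn : 0 < n) : (X ^ n - 1 : F[X]).Monic := by
  simpa using monic_X_pow_sub_C (1 : F) hn.ne'

lemma vecOf_eq_zero_iff (hn : 0 < n) (w : F[X]) : vecOf n w = 0 ↔ X ^ n - 1 ∣ w := by
  rw [← modByMonic_eq_zero_iff_dvd (monic_X_pow_sub_one hn), funext_iff, Polynomial.ext_iff]
  refine ⟨fun h k => ?_, fun h i => h i⟩
  by_cases hk : k < n
  · exact h ⟨k, hk⟩
  · refine coeff_eq_zero_of_degree_lt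
      ((degree_modByMonic_lt w (monic_X_pow_sub_one hn)).trans_le ?_)
    rw [show (X ^ n - 1 : F[X]).degree = n by simpa using degree_X_pow_sub_C hn (1 : F)]
    exact_mod_cast not_lt.1 hk

lemma cycDist_le_of_dvd {u w : F[X]} (hu : u ∣ w) (hw : vecOf n w ≠ 0) :
    cycDist n u ≤ hWt (vecOf n w) := by
  obtain ⟨c, rfl⟩ := hu
  rw [mul_comm] at hw ⊢
  exact Nat.sInf_le ⟨c, hw, rfl⟩

section Codeword

variable (a b f g h : F[X])

lemma vecOf_codeword_snd_of_fst_eq_zero (hn : 0 < n) (h₁ : vecOf n (a * f) = 0) :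
    vecOf n (a * h * f + b * g) = vecOf n (b * g) := by
  rw [map_add, (vecOf_eq_zero_iff hn _).2, zero_add]
  exact ((vecOf_eq_zero_iff hn _).1 h₁).trans ⟨h, by ring⟩

variable [DecidableEq F]

lemma lcm_dvd_codeword_fst_of_snd_eq_zero (hn : 0 < n) (hgdvd : g ∣ X ^ n - 1)
    (h₂ : vecOf n (a * h * f + b * g) = 0) :
    GCDMonoid.lcm f (g / GCDMonoid.gcd g h) ∣ a * f := by
  have hg : g ≠ 0 := ne_zero_of_dvd_ne_zero (monic_X_pow_sub_one hn).ne_zero hgdvd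
  have hghf : g ∣ h * (a * f) := by
    have := hgdvd.trans ((vecOf_eq_zero_iff hn _).1 h₂)
    rw [dvd_add_left (dvd_mul_left g b)] at this
    exact this.trans ⟨1, by ring⟩
  exact lcm_dvd (dvd_mul_left f a) (div_gcd_dvd_of_dvd_mul hg hghf)

lemma gcd_dvd_codeword_snd : GCDMonoid.gcd (h * f) g ∣ a * h * f + b * g :=
  dvd_add ((gcd_dvd_left _ _).trans ⟨a, by ring⟩) ((gcd_dvd_right _ _).mul_left b)

end Codeword

variable [DecidableEq F]

theorem stmt14_general (n : ℕ) (hn : 0 < n) (f g h : F[X]) (hgdvd : g ∣ X ^ n - 1) :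
    ∀ v ∈ QCcode n f g h, v ≠ 0 → hWt2 v ≥ dEucl n f g h := by
  rintro v ⟨a, b, rfl⟩ hv
  change dEucl n f g h ≤ hWt (vecOf n (a * f)) + hWt (vecOf n (a * h * f + b * g))
  unfold dEucl
  by_cases h₁ : vecOf n (a * f) = 0
  · rw [vecOf_codeword_snd_of_fst_eq_zero a b f g h hn h₁] at hv ⊢
    have h₂ : vecOf n (b * g) ≠ 0 := fun h₂ => hv (Prod.ext h₁ h₂)
    have hsnd := cycDist_le_of_dvd (dvd_mul_left g b) h₂
    omega
  by_cases h₂ : vecOf n (a * h * f + b * g) = 0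
  · have hfst := cycDist_le_of_dvd (lcm_dvd_codeword_fst_of_snd_eq_zero a b f g h hn hgdvd h₂) h₁
    omega
  · have hfst := cycDist_le_of_dvd (dvd_mul_left f a) h₁
    have hsnd := cycDist_le_of_dvd (gcd_dvd_codeword_snd a b f g h) h₂
    omega

/-- `d_q^e(f,g,h)` is a lower bound for the minimum Hamming weight
of `Q_q(f,g,h)`. -/
theorem stmt14 [Fintype F] (n : ℕ) (hn : 0 < n) (f g h : F[X])
    (hf : f.Monic) (hg : g.Monic) (hh : h.Monic)
    (hfd : f.degree < n) (hgd : g.degree < n) (hhd : h.degree < n)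
    (hfdvd : f ∣ X ^ n - 1) (hgdvd : g ∣ X ^ n - 1) :
    ∀ v ∈ QCcode n f g h, v ≠ 0 → hWt2 v ≥ dEucl n f g h :=
  stmt14_general n hn f g h hgdvd
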